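/- arXiv:1101.2707 — 2 statements merged into one kernel-verified Lean document; each statement's English description precedes it below -/
import Mathlib

section
/- If n+1 ≡ 0 (mod 4), then f_0(n) ≥ √(n+1)/(2·cos(π/(n+1))). -/
open Real Matrix

/-- `simplexInCube n ℓ` : an isometric copy of the regular n-simplex of edge length ℓ
with barycenter at the origin is contained in the cube [-1/2, 1/2]ⁿ. -/
def simplexInCube (n : ℕ) (ℓ : ℝ) : Prop :=
  ∃ p : Fin (n + 1) → EuclideanSpace ℝ (Fin n),
    (∀ i j, i ≠ j → dist (p i) (p j) = ℓ) ∧ (∑ i, p i = 0) ∧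
    ∀ i k, |p i k| ≤ 1 / 2

/-- `f0 n` : the largest edge length of a regular n-simplex with barycenter at the
origin contained in the unit cube. -/
noncomputable def f0 (n : ℕ) : ℝ := sSup {ℓ : ℝ | simplexInCube n ℓ}

/-!
Put `m = n + 1 = 2h` and `θ i f = π (2 f i + 1) / m`. The vertices are `c • v i` for `i < m`,
where `v i` has the coordinates `cos (θ i f)`, `sin (θ i f)` for `1 ≤ f < h` and
`cos (i π) / √2` (the trigonometric orthogonal matrix construction with all `θ_j = π / m`).
Orthogonality of the characters `i ↦ exp (2 π I d i / m)` gives `∑ i, v i = 0` and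
`‖v i - v j‖² = m` for `i ≠ j`. Every coordinate is `± cos (π a / m)` for an odd `a` (for the
sines this uses that `h` is even), and odd multiples of `π / m` stay at distance `≥ π / m` from
the multiples of `π`, so all coordinates are bounded by `cos (π / m)`. Hence
`c = 1 / (2 cos (π / m))` puts the simplex in the cube, with edge `c √m`.
-/

open Finset

lemma sum_range_exp_eq_zero {m : ℕ} {d : ℤ} (hd : ¬ (m : ℤ) ∣ d) (α : ℝ) :
    ∑ i ∈ range m, Complex.exp ((α + 2 * π * d * i / m : ℝ) * Complex.I) = 0 := by
  rcases Nat.eq_zero_or_pos m with rfl | hm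
  · simp
  have hζ := Complex.isPrimitiveRoot_exp m hm.ne'
  obtain ⟨z, hz_def⟩ : ∃ z, z = Complex.exp (2 * π * Complex.I / m) ^ d := ⟨_, rfl⟩
  have hz : z ≠ 1 := by rwa [hz_def, Ne, hζ.zpow_eq_one_iff_dvd]
  have hzm : z ^ m = 1 := by
    rw [hz_def, ← zpow_natCast, ← _root_.zpow_mul, mul_comm d, _root_.zpow_mul, zpow_natCast,
      hζ.pow_eq_one, _root_.one_zpow]
  have hterm : ∀ i : ℕ, Complex.exp ((α + 2 * π * d * i / m : ℝ) * Complex.I)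
      = Complex.exp (α * Complex.I) * z ^ i := by
    intro i
    rw [hz_def, ← zpow_natCast, ← _root_.zpow_mul, ← Complex.exp_int_mul, ← Complex.exp_add]
    congr 1
    push_cast
    ring
  have hgeom : (∑ i ∈ range m, z ^ i) * (z - 1) = 0 := by rw [geom_sum_mul, hzm, sub_self]
  rw [Finset.sum_congr rfl fun i _ => hterm i, ← Finset.mul_sum,
    (mul_eq_zero.mp hgeom).resolve_right (sub_ne_zero.mpr hz), mul_zero]

lemma sum_range_cos_add_eq_zero {m : ℕ} {d : ℤ} (hd : ¬ (m : ℤ) ∣ d) (α : ℝ) :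
    ∑ i ∈ range m, cos (α + 2 * π * d * i / m) = 0 := by
  have h := congrArg Complex.re (sum_range_exp_eq_zero hd α)
  simpa only [Complex.re_sum, Complex.exp_ofReal_mul_I_re, Complex.zero_re] using h

lemma sum_range_sin_add_eq_zero {m : ℕ} {d : ℤ} (hd : ¬ (m : ℤ) ∣ d) (α : ℝ) :
    ∑ i ∈ range m, sin (α + 2 * π * d * i / m) = 0 := by
  have h := congrArg Complex.im (sum_range_exp_eq_zero hd α)
  simpa only [Complex.im_sum, Complex.exp_ofReal_mul_I_im, Complex.zero_im] using h

lemma sum_range_two_mul_of_symm {M : Type*} [AddCommMonoid M] (g : ℕ → M) {h : ℕ} (hh : 0 < h)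
    (hg : ∀ f ≤ h, g (2 * h - f) = g f) :
    ∑ f ∈ range (2 * h), g f = g 0 + g h + 2 • ∑ f ∈ range (h - 1), g (f + 1) := by
  obtain ⟨k, rfl⟩ : ∃ k, h = k + 1 := ⟨h - 1, by omega⟩
  have hsecond : ∑ f ∈ range (k + 1), g (k + 1 + f) = ∑ f ∈ range (k + 1), g (f + 1) := by
    rw [← sum_range_reflect]
    refine sum_congr rfl fun f hf => ?_
    have hf : f < k + 1 := mem_range.mp hf
    rw [← hg (f + 1) (by omega)]
    congr 1
    omega
  rw [two_mul, sum_range_add, hsecond, sum_range_succ', sum_range_succ, two_nsmul,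
    Nat.add_sub_cancel]
  abel

lemma sum_cos_two_pi_mul_succ_div_two_mul {h : ℕ} (hh : 0 < h) {d : ℤ}
    (hd : ¬ ((2 * h : ℕ) : ℤ) ∣ d) :
    ∑ f ∈ range (h - 1), cos (2 * π * d * (f + 1 : ℕ) / (2 * h)) = -(1 + cos (π * d)) / 2 := by
  have hh' : (h : ℝ) ≠ 0 := by positivity
  have hzero := sum_range_cos_add_eq_zero hd 0
  simp only [zero_add] at hzero
  rw [sum_range_two_mul_of_symm _ hh fun f hf => ?_] at hzero
  · have hmid : cos (2 * π * d * (h : ℕ) / ((2 * h : ℕ) : ℝ)) = cos (π * d) := by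
      congr 1; push_cast; field_simp
    push_cast at hzero hmid ⊢
    rw [hmid, nsmul_eq_mul] at hzero
    simp only [mul_zero, zero_div, cos_zero] at hzero
    linarith
  · rw [← cos_int_mul_two_pi_sub _ d]
    congr 1
    push_cast [Nat.cast_sub (by omega : f ≤ 2 * h)]
    field_simp
    ring

lemma cos_sub_cos_sq_add_sin_sub_sin_sq (a b : ℝ) :
    (cos a - cos b) ^ 2 + (sin a - sin b) ^ 2 = 2 - 2 * cos (a - b) := by
  rw [cos_sub]
  linear_combination sin_sq_add_cos_sq a + sin_sq_add_cos_sq b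

lemma abs_cos_le_cos_of_le_of_le {δ x : ℝ} (hδ : 0 ≤ δ) (hx : δ ≤ x) (hx' : x ≤ π - δ) :
    |cos x| ≤ cos δ := by
  refine abs_le.mpr ⟨?_, cos_le_cos_of_nonneg_of_le_pi hδ (by linarith) hx⟩
  have := cos_le_cos_of_nonneg_of_le_pi hδ (by linarith) (by linarith : δ ≤ π - x)
  rw [cos_pi_sub] at this
  linarith

lemma one_div_sqrt_two_le_cos_pi_div {x : ℝ} (hx : 4 ≤ x) : 1 / √2 ≤ cos (π / x) := by
  have hπ : π / x ≤ π / 4 := div_le_div_of_nonneg_left pi_pos.le four_pos hx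
  calc 1 / √2 = cos (π / 4) := by
        rw [cos_pi_div_four, div_eq_div_iff (by positivity) two_ne_zero, one_mul,
          mul_self_sqrt zero_le_two]
    _ ≤ cos (π / x) :=
        cos_le_cos_of_nonneg_of_le_pi (by positivity) (by linarith [pi_pos]) hπ

lemma four_le_two_mul_of_even {h : ℕ} (heven : Even h) (hh : 0 < h) : (4 : ℝ) ≤ 2 * h := by
  obtain ⟨q, rfl⟩ := heven
  norm_cast
  omega

lemma abs_cos_pi_mul_odd_div_two_mul_le {h : ℕ} (hh : 0 < h) (b : ℤ) :
    |cos (π * (2 * b + 1) / (2 * h))| ≤ cos (π / (2 * h)) := by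
  have hh' : (0 : ℝ) < h := by exact_mod_cast hh
  obtain ⟨q, s, hs0, hsh, rfl⟩ : ∃ q s : ℤ, 0 ≤ s ∧ s < h ∧ b = h * q + s :=
    ⟨b / h, b % h, Int.emod_nonneg _ (by omega), Int.emod_lt_of_pos _ (by omega),
      (Int.mul_ediv_add_emod b h).symm⟩
  have hs0' : (0 : ℝ) ≤ s := by exact_mod_cast hs0
  have hsh' : (s : ℝ) + 1 ≤ h := by exact_mod_cast hsh
  have hshift : π * (2 * ((h * q + s : ℤ) : ℝ) + 1) / (2 * h)
      = π * (2 * s + 1) / (2 * h) + q * π := by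
    push_cast; field_simp; ring
  rw [hshift, cos_add_int_mul_pi, abs_mul, abs_neg_one_zpow, one_mul]
  apply abs_cos_le_cos_of_le_of_le (by positivity)
  · rw [div_le_div_iff_of_pos_right (by positivity)]; nlinarith [pi_pos]
  · rw [show π - π / (2 * h) = π * (2 * h - 1) / (2 * h) by field_simp,
      div_le_div_iff_of_pos_right (by positivity)]
    nlinarith [pi_pos]

noncomputable def vertexAngle (h i f : ℕ) : ℝ := π * (2 * f * i + 1) / (2 * h)

noncomputable def cubeVertex (h i : ℕ) : EuclideanSpace ℝ (Option (Fin (h - 1) × Bool)) :=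
  WithLp.toLp 2 fun
    | none => cos (i * π) / √2
    | some (f, true) => cos (vertexAngle h i (f + 1))
    | some (f, false) => sin (vertexAngle h i (f + 1))

section cubeVertex

variable {h : ℕ}

@[simp] lemma cubeVertex_none (i : ℕ) : cubeVertex h i none = cos (i * π) / √2 := rfl

@[simp] lemma cubeVertex_some_true (i : ℕ) (f : Fin (h - 1)) :
    cubeVertex h i (some (f, true)) = cos (vertexAngle h i (f + 1)) := rfl

@[simp] lemma cubeVertex_some_false (i : ℕ) (f : Fin (h - 1)) :
    cubeVertex h i (some (f, false)) = sin (vertexAngle h i (f + 1)) := rfl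

lemma vertexAngle_sub_vertexAngle (i j f : ℕ) :
    vertexAngle h i f - vertexAngle h j f = 2 * π * ((i - j : ℤ) : ℝ) * f / (2 * h) := by
  unfold vertexAngle; push_cast; ring

lemma dist_cubeVertex (hh : 0 < h) {i j : ℕ} (hij : ¬ ((2 * h : ℕ) : ℤ) ∣ (i - j : ℤ)) :
    dist (cubeVertex h i) (cubeVertex h j) = √(2 * h) := by
  have hmid : (cos (i * π) / √2 - cos (j * π) / √2) ^ 2 = 1 - cos (π * ((i - j : ℤ) : ℝ)) := by
    have := cos_sub_cos_sq_add_sin_sub_sin_sq (i * π) (j * π)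
    rw [sin_nat_mul_pi, sin_nat_mul_pi, sub_self, zero_pow two_ne_zero, add_zero] at this
    rw [← sub_div, div_pow, sq_sqrt zero_le_two, this]
    push_cast; ring_nf
  have hfreq := sum_cos_two_pi_mul_succ_div_two_mul hh hij
  rw [EuclideanSpace.dist_eq]
  congr 1
  simp only [Fintype.sum_option, Fintype.sum_prod_type, Fintype.sum_bool, cubeVertex_none,
    cubeVertex_some_true, cubeVertex_some_false, Real.dist_eq, sq_abs,
    cos_sub_cos_sq_add_sin_sub_sin_sq, vertexAngle_sub_vertexAngle, hmid]
  rw [Fin.sum_univ_eq_sum_range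
      (fun f => 2 - 2 * cos (2 * π * ((i - j : ℤ) : ℝ) * (f + 1 : ℕ) / (2 * h))),
    sum_sub_distrib, ← mul_sum, hfreq]
  simp only [sum_const, card_range, nsmul_eq_mul, Nat.cast_sub hh]
  push_cast
  ring

lemma sum_cubeVertex (hh : 0 < h) : ∑ i ∈ range (2 * h), cubeVertex h i = 0 := by
  have hh' : (h : ℝ) ≠ 0 := by positivity
  ext k
  simp only [WithLp.ofLp_sum, Finset.sum_apply, PiLp.zero_apply]
  have hcol : ∀ f : ℕ, 0 < f → f < 2 * h → ∀ i, vertexAngle h i f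
      = π / (2 * h : ℕ) + 2 * π * (f : ℤ) * i / (2 * h : ℕ) := by
    intro f _ _ i; unfold vertexAngle; push_cast; field_simp; ring
  have hdvd : ∀ f : ℕ, 0 < f → f < 2 * h → ¬ ((2 * h : ℕ) : ℤ) ∣ (f : ℤ) := fun f hf hfh hd =>
    absurd (Int.le_of_dvd (by omega) hd) (by omega)
  rcases k with _ | ⟨f, _ | _⟩
  · have hnone : ∀ i : ℕ, cos (i * π) = cos (0 + 2 * π * (h : ℤ) * i / (2 * h : ℕ)) := by
      intro i; congr 1; push_cast; field_simp; ring
    simp only [cubeVertex_none, ← sum_div, hnone,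
      sum_range_cos_add_eq_zero (hdvd h hh (by omega)), zero_div]
  · simp only [cubeVertex_some_false, hcol (f + 1) (by omega) (by omega),
      sum_range_sin_add_eq_zero (hdvd (f + 1) (by omega) (by omega))]
  · simp only [cubeVertex_some_true, hcol (f + 1) (by omega) (by omega),
      sum_range_cos_add_eq_zero (hdvd (f + 1) (by omega) (by omega))]

lemma abs_cubeVertex_le (heven : Even h) (hh : 0 < h) (i : ℕ)
    (k : Option (Fin (h - 1) × Bool)) :
    |cubeVertex h i k| ≤ cos (π / (2 * h)) := by
  have hodd : ∀ f : ℕ, vertexAngle h i f = π * (2 * ((f * i : ℕ) : ℤ) + 1) / (2 * h) := by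
    intro f; unfold vertexAngle; push_cast; ring
  rcases k with _ | ⟨f, _ | _⟩
  · calc |cubeVertex h i none| = |cos (i * π)| / √2 := by
          simp [abs_div, abs_of_pos (sqrt_pos.mpr two_pos)]
      _ ≤ 1 / √2 := by gcongr; exact abs_cos_le_one _
      _ ≤ cos (π / (2 * h)) :=
          one_div_sqrt_two_le_cos_pi_div (four_le_two_mul_of_even heven hh)
  · obtain ⟨q, rfl⟩ := heven
    rw [cubeVertex_some_false, hodd, ← cos_pi_div_two_sub]
    have hq : (q : ℝ) ≠ 0 := by norm_cast; omega
    convert abs_cos_pi_mul_odd_div_two_mul_le hh (q - ((f + 1) * i : ℕ) - 1) using 3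
    push_cast
    field_simp
    ring
  · rw [cubeVertex_some_true, hodd]
    exact abs_cos_pi_mul_odd_div_two_mul_le hh _

end cubeVertex

lemma simplexInCube_of_equiv {n : ℕ} {ℓ : ℝ} {ι κ : Type*} [Fintype ι] [Fintype κ]
    (eι : ι ≃ Fin n) (eκ : κ ≃ Fin (n + 1)) (p : κ → EuclideanSpace ℝ ι)
    (hdist : Pairwise fun i j => dist (p i) (p j) = ℓ) (hsum : ∑ i, p i = 0)
    (hbound : ∀ i k, |p i k| ≤ 1 / 2) : simplexInCube n ℓ := by
  let T := LinearIsometryEquiv.piLpCongrLeft 2 ℝ ℝ eι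
  refine ⟨fun i => T (p (eκ.symm i)), fun i j hij => ?_, ?_, fun i k => ?_⟩
  · rw [T.dist_map]
    exact hdist (eκ.symm.injective.ne hij)
  · rw [← map_sum, Equiv.sum_comp eκ.symm p, hsum, map_zero]
  · exact hbound _ _

lemma bddAbove_simplexInCube {n : ℕ} (hn : 0 < n) : BddAbove {ℓ | simplexInCube n ℓ} := by
  refine ⟨√n, ?_⟩
  rintro ℓ ⟨p, hdist, -, hbound⟩
  have h01 : (0 : Fin (n + 1)) ≠ 1 := by
    rw [Ne, Fin.ext_iff, Fin.val_zero, Fin.val_one', Nat.one_mod_eq_one.mpr (by omega)]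
    omega
  rw [← hdist 0 1 h01, EuclideanSpace.dist_eq]
  refine sqrt_le_sqrt ?_
  calc ∑ k, dist (p 0 k) (p 1 k) ^ 2 ≤ ∑ _k : Fin n, (1 : ℝ) := by
        refine sum_le_sum fun k _ => ?_
        have hk : dist (p 0 k) (p 1 k) ≤ 1 := (Real.dist_eq _ _).trans_le <|
          (abs_sub _ _).trans (by linarith [hbound 0 k, hbound 1 k])
        exact pow_le_one₀ dist_nonneg hk
    _ = n := by simp

lemma simplexInCube_of_add_one_eq_two_mul {n h : ℕ} (hnh : n + 1 = 2 * h) (heven : Even h) :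
    simplexInCube n (√(2 * h) / (2 * cos (π / (2 * h)))) := by
  have hh : 0 < h := by omega
  have hcos : 0 < cos (π / (2 * h)) :=
    (by positivity : (0 : ℝ) < 1 / √2).trans_le
      (one_div_sqrt_two_le_cos_pi_div (four_le_two_mul_of_even heven hh))
  set c := (2 * cos (π / (2 * h)))⁻¹
  have hc : 0 < c := by positivity
  refine simplexInCube_of_equiv (Fintype.equivFinOfCardEq ?_) (finCongr hnh.symm)
    (fun i => c • cubeVertex h i) (fun i j hij => ?_) ?_ (fun i k => ?_)
  · simp only [Fintype.card_option, Fintype.card_prod, Fintype.card_fin, Fintype.card_bool]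
    omega
  · have hij' : ¬ ((2 * h : ℕ) : ℤ) ∣ ((i : ℕ) - (j : ℕ) : ℤ) := fun hd => hij <| Fin.ext <| by
      have := Int.eq_zero_of_abs_lt_dvd hd (abs_sub_lt_iff.mpr ⟨by omega, by omega⟩)
      omega
    dsimp only
    rw [dist_smul₀, dist_cubeVertex hh hij', Real.norm_of_nonneg hc.le, div_eq_inv_mul]
  · rw [← smul_sum, Fin.sum_univ_eq_sum_range (cubeVertex h ·), sum_cubeVertex hh, smul_zero]
  · rw [PiLp.smul_apply, smul_eq_mul, abs_mul, abs_of_pos hc]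
    calc c * |cubeVertex h i k| ≤ c * cos (π / (2 * h)) :=
          mul_le_mul_of_nonneg_left (abs_cubeVertex_le heven hh i k) hc.le
      _ = 1 / 2 := by simp only [c]; field_simp

/-- If n+1 ≡ 0 (mod 4), then f₀(n) ≥ √(n+1)/(2 cos(π/(n+1))). -/
theorem stmt6 (n : ℕ) (hn : (n + 1) % 4 = 0) :
    f0 n ≥ Real.sqrt (n + 1) / (2 * Real.cos (Real.pi / (n + 1))) := by
  obtain ⟨q, hq⟩ : ∃ q, n + 1 = 2 * (2 * q) := ⟨(n + 1) / 4, by omega⟩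
  have hcast : (n : ℝ) + 1 = 2 * ((2 * q : ℕ) : ℝ) := by exact_mod_cast hq
  rw [hcast]
  exact le_csSup (bddAbove_simplexInCube (by omega))
    (simplexInCube_of_add_one_eq_two_mul hq (even_two_mul q))
end

section
/- For every n ≥ 1, f_0(2n+1) ≥ √2 · f_0(n). -/
open Real Matrix

/-!
Let `p₀, …, pₙ` be the vertices of a regular simplex of edge `ℓ` centred at the origin of
`[-1/2, 1/2]ⁿ`. In `ℝ²ⁿ⁺¹` the `2n + 2` points `(pᵢ, pᵢ, t)` and `(pᵢ, -pᵢ, -t)` are again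
centred. Two of them with the same sign are at distance `√2 ‖pᵢ - pⱼ‖ = √2 ℓ`; two of opposite
signs are, by the parallelogram law, at squared distance `2 ‖pᵢ‖² + 2 ‖pⱼ‖² + 4 t²`. In a centred
regular simplex with `N` vertices every vertex satisfies `‖pᵢ‖² = (N - 1) ℓ² / (2 N)`, so the
choice `t² = ℓ² / (2 (n + 1))` makes all edges equal to `√2 ℓ`. The same identity together with
`‖pᵢ‖² ≤ n / 4` gives `ℓ² ≤ (n + 1) / 2`, that is `|t| ≤ 1 / 2`, so the new simplex stays in the
cube.
-/

open RealInnerProductSpace Pointwise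

section RegularSimplex

variable {V E : Type*} [Fintype V] [NormedAddCommGroup E]

structure IsCenteredRegularSimplex (p : V → E) (ℓ : ℝ) : Prop where
  dist_eq : Pairwise fun i j => dist (p i) (p j) = ℓ
  sum_eq_zero : ∑ i, p i = 0

namespace IsCenteredRegularSimplex

variable {p : V → E} {ℓ : ℝ}

lemma nonneg [Nontrivial V] (h : IsCenteredRegularSimplex p ℓ) : 0 ≤ ℓ := by
  obtain ⟨i, j, hij⟩ := exists_pair_ne V
  exact h.dist_eq hij ▸ dist_nonneg

lemma sum_norm_sub_sq (h : IsCenteredRegularSimplex p ℓ) (i : V) :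
    ∑ j, ‖p i - p j‖ ^ 2 = (Fintype.card V - 1) * ℓ ^ 2 := by
  classical
  have : Nonempty V := ⟨i⟩
  have hterm : ∀ j, ‖p i - p j‖ ^ 2 = if j = i then 0 else ℓ ^ 2 := fun j => by
    split_ifs with hji
    · simp [hji]
    · rw [← dist_eq_norm, h.dist_eq (Ne.symm hji)]
  rw [Finset.sum_congr rfl fun j _ => hterm j, Finset.sum_ite, Finset.sum_const_zero, zero_add,
    Finset.sum_const, nsmul_eq_mul, Finset.filter_ne', Finset.card_erase_of_mem
    (Finset.mem_univ i), Finset.card_univ, Nat.cast_sub Fintype.card_pos, Nat.cast_one]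

variable [InnerProductSpace ℝ E]

lemma card_mul_norm_sq_add_sum (h : IsCenteredRegularSimplex p ℓ) (i : V) :
    Fintype.card V * ‖p i‖ ^ 2 + ∑ j, ‖p j‖ ^ 2 = (Fintype.card V - 1) * ℓ ^ 2 := by
  have hinner : ∑ j, 2 * ⟪p i, p j⟫ = 0 := by
    rw [← Finset.mul_sum, ← inner_sum, h.sum_eq_zero, inner_zero_right, mul_zero]
  rw [← h.sum_norm_sub_sq i]
  simp only [norm_sub_sq_real, Finset.sum_add_distrib, Finset.sum_sub_distrib, hinner,
    Finset.sum_const, Finset.card_univ, nsmul_eq_mul]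
  ring

lemma two_mul_card_mul_norm_sq (h : IsCenteredRegularSimplex p ℓ) (i : V) :
    2 * Fintype.card V * ‖p i‖ ^ 2 = (Fintype.card V - 1) * ℓ ^ 2 := by
  have hN : (0 : ℝ) < Fintype.card V := by
    have : Nonempty V := ⟨i⟩
    exact_mod_cast Fintype.card_pos
  have hsum : 2 * ∑ j, ‖p j‖ ^ 2 = (Fintype.card V - 1) * ℓ ^ 2 := by
    have := Finset.sum_congr rfl fun j (_ : j ∈ Finset.univ) => h.card_mul_norm_sq_add_sum j
    simp only [Finset.sum_add_distrib, ← Finset.mul_sum, Finset.sum_const, Finset.card_univ,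
      nsmul_eq_mul] at this
    exact mul_left_cancel₀ hN.ne' (by linarith)
  linarith [h.card_mul_norm_sq_add_sum i]

end IsCenteredRegularSimplex

end RegularSimplex

section Cube

variable {V ι : Type*}

lemma EuclideanSpace.norm_sq_le_card_mul_sq [Fintype ι] {x : EuclideanSpace ℝ ι} {c : ℝ}
    (hx : ∀ k, |x k| ≤ c) : ‖x‖ ^ 2 ≤ Fintype.card ι * c ^ 2 := by
  rw [EuclideanSpace.real_norm_sq_eq]
  calc ∑ k, x k ^ 2 ≤ ∑ _k : ι, c ^ 2 :=
        Finset.sum_le_sum fun k _ => by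
          simpa only [sq_abs] using pow_le_pow_left₀ (abs_nonneg _) (hx k) 2
    _ = Fintype.card ι * c ^ 2 := by simp

def InUnitCube (p : V → EuclideanSpace ℝ ι) : Prop := ∀ i k, |p i k| ≤ 1 / 2

lemma IsCenteredRegularSimplex.sq_le_of_inUnitCube [Fintype V] [Fintype ι] [Nonempty ι] {p : V → EuclideanSpace ℝ ι}
    {ℓ : ℝ} (h : IsCenteredRegularSimplex p ℓ) (hp : InUnitCube p)
    (hcard : Fintype.card V = Fintype.card ι + 1) : ℓ ^ 2 ≤ Fintype.card V / 2 := by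
  obtain ⟨i⟩ : Nonempty V := Fintype.card_pos_iff.mp (by omega)
  have hι : (0 : ℝ) < Fintype.card ι := by exact_mod_cast Fintype.card_pos
  have hnorm := EuclideanSpace.norm_sq_le_card_mul_sq (hp i)
  have hN := h.two_mul_card_mul_norm_sq i
  rw [hcard] at hN ⊢
  push_cast at hN ⊢
  nlinarith

def liftVertex (t s : ℝ) (x : EuclideanSpace ℝ ι) : EuclideanSpace ℝ ((ι ⊕ ι) ⊕ Unit) :=
  WithLp.toLp 2 (Sum.elim (Sum.elim x (s • x)) fun _ => s * t)

lemma norm_liftVertex_sub_sq [Fintype ι] (t s s' : ℝ) (x y : EuclideanSpace ℝ ι) :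
    ‖liftVertex t s x - liftVertex t s' y‖ ^ 2
      = ‖x - y‖ ^ 2 + ‖s • x - s' • y‖ ^ 2 + ((s - s') * t) ^ 2 := by
  simp only [liftVertex, EuclideanSpace.real_norm_sq_eq, PiLp.sub_apply, Fintype.sum_sum_type,
    Sum.elim_inl, Sum.elim_inr, PiLp.smul_apply, Pi.smul_apply, smul_eq_mul, Finset.univ_unique,
    Finset.sum_singleton]
  ring

def doubleSimplex (p : V → EuclideanSpace ℝ ι) (t : ℝ) :
    V ⊕ V → EuclideanSpace ℝ ((ι ⊕ ι) ⊕ Unit) :=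
  Sum.elim (fun v => liftVertex t 1 (p v)) (fun v => liftVertex t (-1) (p v))

variable {p : V → EuclideanSpace ℝ ι} {ℓ : ℝ}

lemma IsCenteredRegularSimplex.doubleSimplex [Fintype V] [Fintype ι]
    (h : IsCenteredRegularSimplex p ℓ) (hℓ : 0 ≤ ℓ) :
    IsCenteredRegularSimplex (_root_.doubleSimplex p (ℓ / √(2 * Fintype.card V))) (√2 * ℓ) := by
  set t := ℓ / √(2 * Fintype.card V)
  have hdist : ∀ {x y : EuclideanSpace ℝ ((ι ⊕ ι) ⊕ Unit)}, ‖x - y‖ ^ 2 = 2 * ℓ ^ 2 →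
      dist x y = √2 * ℓ := fun hxy => by
    rw [dist_eq_norm, ← Real.sqrt_sq (norm_nonneg _), hxy, Real.sqrt_mul zero_le_two,
      Real.sqrt_sq hℓ]
  have hcross : ∀ v w, ‖p v - p w‖ ^ 2 + ‖p v + p w‖ ^ 2 + (2 * t) ^ 2 = 2 * ℓ ^ 2 := by
    intro v w
    have hN : (0 : ℝ) < Fintype.card V := by
      have : Nonempty V := ⟨v⟩
      exact_mod_cast Fintype.card_pos
    have ht : 2 * Fintype.card V * t ^ 2 = ℓ ^ 2 := by
      rw [div_pow, Real.sq_sqrt (by positivity)]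
      field_simp
    rw [add_comm (‖p v - p w‖ ^ 2), parallelogram_law_with_norm ℝ]
    apply mul_left_cancel₀ hN.ne'
    linear_combination h.two_mul_card_mul_norm_sq v + h.two_mul_card_mul_norm_sq w + 2 * ht
  constructor
  · rintro (v | v) (w | w) hvw <;> apply hdist <;>
      simp only [_root_.doubleSimplex, Sum.elim_inl, Sum.elim_inr, norm_liftVertex_sub_sq]
    · rw [one_smul, one_smul, ← dist_eq_norm, h.dist_eq (ne_of_apply_ne Sum.inl hvw)]
      ring
    · rw [one_smul, neg_smul, one_smul, sub_neg_eq_add]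
      linear_combination hcross v w
    · rw [neg_smul, one_smul, one_smul, ← neg_add', norm_neg]
      linear_combination hcross v w
    · rw [neg_smul, neg_smul, one_smul, one_smul, neg_sub_neg, norm_sub_rev (p w),
        ← dist_eq_norm, h.dist_eq (ne_of_apply_ne Sum.inr hvw)]
      ring
  · have hcoord : ∀ k, ∑ v, p v k = 0 := fun k => by
      simpa using congrArg (· k) h.sum_eq_zero
    ext ((k | k) | k) <;> simp [_root_.doubleSimplex, liftVertex, Fintype.sum_sum_type, hcoord]

lemma InUnitCube.doubleSimplex {t : ℝ} (hp : InUnitCube p) (ht : |t| ≤ 1 / 2) :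
    InUnitCube (_root_.doubleSimplex p t) := by
  rintro (v | v) ((k | k) | k) <;>
    simp only [_root_.doubleSimplex, liftVertex, Sum.elim_inl, Sum.elim_inr, PiLp.toLp_apply,
      Pi.smul_apply, smul_eq_mul, abs_mul, abs_neg, abs_one, one_mul] <;>
    first | exact hp v k | exact ht

end Cube

lemma simplexInCube_iff {n : ℕ} {ℓ : ℝ} : simplexInCube n ℓ ↔
    ∃ p : Fin (n + 1) → EuclideanSpace ℝ (Fin n), IsCenteredRegularSimplex p ℓ ∧ InUnitCube p :=
  ⟨fun ⟨p, hd, hs, hp⟩ => ⟨p, ⟨hd, hs⟩, hp⟩, fun ⟨p, ⟨hd, hs⟩, hp⟩ => ⟨p, hd, hs, hp⟩⟩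

lemma simplexInCube_of_card_eq {V ι : Type*} [Fintype V] [Fintype ι] {n : ℕ}
    {p : V → EuclideanSpace ℝ ι} {ℓ : ℝ} (h : IsCenteredRegularSimplex p ℓ) (hp : InUnitCube p)
    (hV : Fintype.card V = n + 1) (hι : Fintype.card ι = n) : simplexInCube n ℓ := by
  let e := Fintype.equivFinOfCardEq hV
  let L := LinearIsometryEquiv.piLpCongrLeft 2 ℝ ℝ (Fintype.equivFinOfCardEq hι)
  refine simplexInCube_iff.mpr ⟨fun i => L (p (e.symm i)),
    ⟨fun i j hij => (L.dist_map _ _).trans (h.dist_eq (e.symm.injective.ne hij)), ?_⟩,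
    fun i k => ?_⟩
  · rw [← map_sum, e.symm.sum_comp p, h.sum_eq_zero, map_zero]
  · simpa [L, LinearIsometryEquiv.piLpCongrLeft_apply] using hp _ _

lemma simplexInCube.sq_le {n : ℕ} (hn : 1 ≤ n) {ℓ : ℝ} (h : simplexInCube n ℓ) :
    ℓ ^ 2 ≤ (n + 1) / 2 := by
  obtain ⟨p, hreg, hp⟩ := simplexInCube_iff.mp h
  have : Nonempty (Fin n) := Fin.pos_iff_nonempty.mp hn
  simpa using hreg.sq_le_of_inUnitCube hp (by simp)

lemma simplexInCube.two_mul_add_one {n : ℕ} (hn : 1 ≤ n) {ℓ : ℝ} (h : simplexInCube n ℓ) :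
    simplexInCube (2 * n + 1) (√2 * ℓ) := by
  have hℓsq := h.sq_le hn
  obtain ⟨p, hreg, hp⟩ := simplexInCube_iff.mp h
  have : Nontrivial (Fin (n + 1)) := Fin.nontrivial_iff_two_le.mpr (by omega)
  have hℓ := hreg.nonneg
  have ht : |ℓ / √(2 * Fintype.card (Fin (n + 1)))| ≤ 1 / 2 := by
    refine abs_le_of_sq_le_sq ?_ (by norm_num)
    rw [div_pow, sq_sqrt (by positivity), Fintype.card_fin, div_le_iff₀ (by positivity)]
    push_cast
    linarith
  exact simplexInCube_of_card_eq (hreg.doubleSimplex hℓ) (hp.doubleSimplex ht)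
    (by rw [Fintype.card_sum, Fintype.card_fin]; ring)
    (by rw [Fintype.card_sum, Fintype.card_sum, Fintype.card_fin, Fintype.card_unit]; ring)

lemma simplexInCube_zero (n : ℕ) : simplexInCube n 0 :=
  ⟨0, by simp, by simp, by simp⟩

lemma bddAbove_setOf_simplexInCube {n : ℕ} (hn : 1 ≤ n) : BddAbove {ℓ | simplexInCube n ℓ} :=
  ⟨√((n + 1) / 2), fun _ h => (le_abs_self _).trans (Real.abs_le_sqrt (h.sq_le hn))⟩

/-- f₀(2n+1) ≥ √2 · f₀(n). -/
theorem stmt12 (n : ℕ) (hn : 1 ≤ n) : f0 (2 * n + 1) ≥ Real.sqrt 2 * f0 n := by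
  have hsub : √2 • {ℓ | simplexInCube n ℓ} ⊆ {ℓ | simplexInCube (2 * n + 1) ℓ} := by
    rintro _ ⟨ℓ, hℓ, rfl⟩
    exact hℓ.two_mul_add_one hn
  have hne : {ℓ | simplexInCube n ℓ}.Nonempty := ⟨0, simplexInCube_zero n⟩
  calc √2 * f0 n = sSup (√2 • {ℓ | simplexInCube n ℓ}) :=
        (Real.sSup_smul_of_nonneg (sqrt_nonneg 2) _).symm
    _ ≤ f0 (2 * n + 1) :=
        csSup_le_csSup (bddAbove_setOf_simplexInCube (by omega)) hne.smul_set hsub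
end
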